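/- Let φ ∈ Hom_R(I, R/I) and let ab be an edge of G. Then there exists a polynomial p ∈ R with p ≡ φ(x_a x_b) (mod I) such that every monomial m appearing in p with nonzero coefficient satisfies: gcd(m, x_a x_b) ≠ 1, or m is divisible by some element of Λ_{ab}. -/

import Mathlib

open MvPolynomial

noncomputable section

/-- The edge ideal of the (possibly non-simple) graph on `V` given by the
symmetric relation `E`: the ideal generated by the monomials `X a * X b`
over all pairs `(a, b)` with `E a b`. -/
def edgeIdeal (k : Type*) [Field k] {V : Type*} (E : V → V → Prop) :
    Ideal (MvPolynomial V k) :=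
  Ideal.span {m | ∃ a b, E a b ∧ m = X a * X b}

/-- The generator `X u * X v` of the edge ideal, as an element of the ideal. -/
def edgeGen (k : Type*) [Field k] {V : Type*} (E : V → V → Prop) (u v : V) (h : E u v) :
    edgeIdeal k E :=
  ⟨X u * X v, Ideal.subset_span ⟨u, v, h, rfl⟩⟩

/-- `φ : I → R/I` is a trivial first-order deformation: it lies in the image of `δ*`,
i.e. it is induced by a `k`-derivation of `R`. -/
def IsTrivialDef (k : Type*) [Field k] {V : Type*} (E : V → V → Prop)
    (φ : edgeIdeal k E →ₗ[MvPolynomial V k] MvPolynomial V k ⧸ edgeIdeal k E) : Prop :=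
  ∃ d : Derivation k (MvPolynomial V k) (MvPolynomial V k),
    ∀ f : edgeIdeal k E, φ f = Ideal.Quotient.mk (edgeIdeal k E) (d f)

/-- `R/I(G)` is rigid: `δ*` is surjective, i.e. `T¹(R/I) = 0`. -/
def RigidEdgeIdeal (k : Type*) [Field k] {V : Type*} (E : V → V → Prop) : Prop :=
  ∀ φ : edgeIdeal k E →ₗ[MvPolynomial V k] MvPolynomial V k ⧸ edgeIdeal k E,
    IsTrivialDef k E φ

open scoped Classical in
/-- The neighborhood of a vertex. -/
def nbhd {V : Type*} [Fintype V] (E : V → V → Prop) (v : V) : Finset V :=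
  Finset.univ.filter (fun w => E v w)

open scoped Classical in
/-- The set `Λ_{ab}` of squarefree monomials `√(∏_{g ∈ Λ} x_{c g})` over all choice
functions `c` with `c g ∈ Λ_g = N(g) \ {a,b}` for every `g ∈ Λ = (N(a)\{b}) ∪ (N(b)\{a})`. -/
def LambdaSet (k : Type*) [Field k] {V : Type*} [Fintype V] [DecidableEq V]
    (E : V → V → Prop) (a b : V) : Set (MvPolynomial V k) :=
  {m | ∃ c : V → V,
    (∀ g ∈ (nbhd E a).erase b ∪ (nbhd E b).erase a, c g ∈ nbhd E g \ {a, b}) ∧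
    m = ∏ v ∈ ((nbhd E a).erase b ∪ (nbhd E b).erase a).image c, X v}

/-- `φ` is the type I map `φ^λ_{ab}` : it sends the generator `x_a x_b` to `λ` and every
other minimal monomial generator of the edge ideal to `0`. -/
def IsTypeI (k : Type*) [Field k] {V : Type*} (E : V → V → Prop) (a b : V) (hab : E a b)
    (lam : MvPolynomial V k)
    (φ : edgeIdeal k E →ₗ[MvPolynomial V k] MvPolynomial V k ⧸ edgeIdeal k E) : Prop :=
  φ (edgeGen k E a b hab) = Ideal.Quotient.mk (edgeIdeal k E) lam ∧
  ∀ u v (h : E u v), X u * X v ≠ (X a * X b : MvPolynomial V k) →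
    φ (edgeGen k E u v h) = 0

open scoped Classical in
/-- `Γ(L)`: the vertices of `N̄(a)` not in `L` that are adjacent in `N̄(a)`
(the complement of the underlying simple graph induced on `N(a)`) to some vertex of `L`. -/
def GammaF {V : Type*} [Fintype V] [DecidableEq V] (E : V → V → Prop) (a : V)
    (L : Finset V) : Finset V :=
  (nbhd E a \ L).filter (fun g => ∃ u ∈ L, u ≠ g ∧ ¬ E u g)

open scoped Classical in
/-- The set `Γ_{a,L}` of squarefree monomials `√(∏_{g ∈ Γ(L)} x_{c g})` over all choice
functions `c` with `c g ∈ Γ_g = N(g) \ {a}`. -/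
def GammaSet (k : Type*) [Field k] {V : Type*} [Fintype V] [DecidableEq V]
    (E : V → V → Prop) (a : V) (L : Finset V) : Set (MvPolynomial V k) :=
  {m | ∃ c : V → V,
    (∀ g ∈ GammaF E a L, c g ∈ (nbhd E g).erase a) ∧
    m = ∏ v ∈ (GammaF E a L).image c, X v}

/-- `φ` is the type II map `φ^λ_{a,L}` : it sends the generator `x_a x_u` to `λ·x_u`
for `u ∈ L` and every other minimal monomial generator of the edge ideal to `0`. -/
def IsTypeII (k : Type*) [Field k] {V : Type*} (E : V → V → Prop) (a : V) (L : Finset V)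
    (lam : MvPolynomial V k)
    (φ : edgeIdeal k E →ₗ[MvPolynomial V k] MvPolynomial V k ⧸ edgeIdeal k E) : Prop :=
  (∀ u ∈ L, ∀ h : E a u, φ (edgeGen k E a u h) =
      Ideal.Quotient.mk (edgeIdeal k E) (lam * X u)) ∧
  ∀ u v (h : E u v), (∀ x ∈ L, X u * X v ≠ (X a * X x : MvPolynomial V k)) →
    φ (edgeGen k E u v h) = 0

section AuxLemmas

variable {k : Type*} [Field k] {V : Type*}

lemma X_mul_X_eq_monomial (u v : V) :
    (X u * X v : MvPolynomial V k) =
      monomial (Finsupp.single u 1 + Finsupp.single v 1) 1 := by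
  rw [X, X, monomial_mul, one_mul]

lemma edgeIdeal_eq_span_monomial (E : V → V → Prop) :
    edgeIdeal k E = Ideal.span ((fun s => (monomial s (1 : k))) ''
      {s | ∃ u v, E u v ∧ s = Finsupp.single u 1 + Finsupp.single v 1}) := by
  unfold edgeIdeal
  congr 1
  ext m
  constructor
  · rintro ⟨u, v, h, rfl⟩; exact ⟨_, ⟨u, v, h, rfl⟩, (X_mul_X_eq_monomial u v).symm⟩
  · rintro ⟨s, ⟨u, v, h, rfl⟩, rfl⟩; exact ⟨u, v, h, (X_mul_X_eq_monomial u v).symm⟩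

lemma mem_edgeIdeal_iff (E : V → V → Prop) (f : MvPolynomial V k) :
    f ∈ edgeIdeal k E ↔ ∀ d ∈ f.support, ∃ u v, E u v ∧
      Finsupp.single u 1 + Finsupp.single v 1 ≤ d := by
  rw [edgeIdeal_eq_span_monomial, mem_ideal_span_monomial_image]
  constructor
  · intro h d hd; obtain ⟨s, ⟨u, v, he, rfl⟩, hle⟩ := h d hd; exact ⟨u, v, he, hle⟩
  · intro h d hd; obtain ⟨u, v, he, hle⟩ := h d hd; exact ⟨_, ⟨u, v, he, rfl⟩, hle⟩

lemma prod_X_eq_monomial [DecidableEq V] (F : Finset V) :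
    (∏ v ∈ F, X v : MvPolynomial V k) = monomial (∑ v ∈ F, Finsupp.single v 1) 1 := by
  induction F using Finset.induction with
  | empty => simp
  | insert _ _ h ih =>
      rw [Finset.prod_insert h, Finset.sum_insert h, ih, X, monomial_mul, one_mul]

lemma smul_mk_eq (E : V → V → Prop) (r f : MvPolynomial V k) :
    r • (Ideal.Quotient.mk (edgeIdeal k E) f) = Ideal.Quotient.mk (edgeIdeal k E) (r * f) := by
  rw [← Ideal.Quotient.mk_eq_mk, ← Ideal.Quotient.mk_eq_mk, ← Submodule.Quotient.mk_smul,
    smul_eq_mul]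

lemma key_step (E : V → V → Prop) (hsymm : Symmetric E)
    (φ : edgeIdeal k E →ₗ[MvPolynomial V k] MvPolynomial V k ⧸ edgeIdeal k E)
    (a b : V) (hab : E a b) (q : MvPolynomial V k)
    (hq : Ideal.Quotient.mk (edgeIdeal k E) q = φ (edgeGen k E a b hab))
    (d : V →₀ ℕ) (hd : q.coeff d ≠ 0)
    (hnbad : ¬ ∃ u v, E u v ∧ Finsupp.single u 1 + Finsupp.single v 1 ≤ d)
    (hda : d a = 0) (hdb : d b = 0)
    (g : V) (hg : E a g) (hgb : g ≠ b) :
    ∃ h, E g h ∧ h ≠ a ∧ h ≠ b ∧ d h ≠ 0 := by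
  classical
  obtain ⟨r, hr⟩ := Ideal.Quotient.mk_surjective (φ (edgeGen k E a g hg))
  have hsm : (X g : MvPolynomial V k) • edgeGen k E a b hab
      = (X b : MvPolynomial V k) • edgeGen k E a g hg := by
    apply Subtype.ext
    show (X g : MvPolynomial V k) * (X a * X b) = X b * (X a * X g)
    ring
  have hI : X g * q - X b * r ∈ edgeIdeal k E := by
    rw [← Ideal.Quotient.eq, ← smul_mk_eq, ← smul_mk_eq, hq, hr, ← map_smul, ← map_smul, hsm]
  have hce : (X g * q - X b * r).coeff (Finsupp.single g 1 + d) = q.coeff d := by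
    rw [coeff_sub, coeff_X_mul]
    have h0 : (X b * r).coeff (Finsupp.single g 1 + d) = 0 := by
      rw [coeff_X_mul', if_neg]
      rw [Finsupp.mem_support_iff]
      simp [Finsupp.add_apply, Finsupp.single_apply, hgb, hdb]
    rw [h0, sub_zero]
  have hes : (Finsupp.single g 1 + d) ∈ (X g * q - X b * r).support := by
    rw [mem_support_iff, hce]; exact hd
  obtain ⟨u, v, huv, hle⟩ := (mem_edgeIdeal_iff E _).mp hI _ hes
  have hx : ∀ x, (if u = x then 1 else 0) + (if v = x then 1 else 0)
      ≤ (if g = x then 1 else 0) + d x := by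
    intro x
    have := hle x
    simpa [Finsupp.add_apply, Finsupp.single_apply] using this
  obtain ⟨h, hEh, hdh⟩ : ∃ h, E g h ∧ d h ≠ 0 := by
    by_cases hug : u = g
    · by_cases hvg : v = g
      · have hgg : E g g := by rw [hug] at huv; rw [hvg] at huv; exact huv
        refine ⟨g, hgg, ?_⟩
        have h3 := hx g
        rw [if_pos hug, if_pos hvg, if_pos rfl] at h3
        omega
      · have hgv : E g v := by rw [hug] at huv; exact huv
        refine ⟨v, hgv, ?_⟩
        have h1 : ¬ u = v := fun h => hvg (h ▸ hug)
        have h2 : ¬ g = v := fun h => hvg h.symm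
        have h3 := hx v
        rw [if_neg h1, if_pos rfl, if_neg h2] at h3
        omega
    · by_cases hvg : v = g
      · have hug' : E u g := by rw [hvg] at huv; exact huv
        refine ⟨u, hsymm hug', ?_⟩
        have h1 : ¬ v = u := fun h => hug (h ▸ hvg)
        have h2 : ¬ g = u := fun h => hug h.symm
        have h3 := hx u
        rw [if_pos rfl, if_neg h1, if_neg h2] at h3
        omega
      · exfalso
        apply hnbad
        refine ⟨u, v, huv, fun x => ?_⟩
        have h3 := hx x
        rw [Finsupp.add_apply, Finsupp.single_apply, Finsupp.single_apply]
        by_cases hgx : g = x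
        · have hux : ¬ u = x := fun h => hug (h.trans hgx.symm)
          have hvx : ¬ v = x := fun h => hvg (h.trans hgx.symm)
          rw [if_neg hux, if_neg hvx]
          simp
        · rw [if_neg hgx] at h3
          simpa using h3
  exact ⟨h, hEh, fun h' => hdh (h' ▸ hda), fun h' => hdh (h' ▸ hdb), hdh⟩

lemma mem_nbhd [Fintype V] (E : V → V → Prop) (v w : V) :
    w ∈ nbhd E v ↔ E v w := by
  classical
  simp [nbhd]

end AuxLemmas


/-- For any `φ ∈ Hom_R(I, R/I)` and any edge `ab` of `G`, there is a
polynomial `p ≡ φ(x_a x_b) (mod I)` each of whose monomials `m` satisfies: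
`gcd(m, x_a x_b) ≠ 1` (i.e. `x_a ∣ m` or `x_b ∣ m`), or `m` is divisible by some element
of `Λ_{ab}`. -/
theorem statement5 {k : Type*} [Field k] {V : Type*} [Fintype V] [DecidableEq V]
    (E : V → V → Prop) (hsymm : Symmetric E)
    (φ : edgeIdeal k E →ₗ[MvPolynomial V k] MvPolynomial V k ⧸ edgeIdeal k E)
    (a b : V) (hab : E a b) :
    ∃ p : MvPolynomial V k,
      Ideal.Quotient.mk (edgeIdeal k E) p = φ (edgeGen k E a b hab) ∧
      ∀ d ∈ p.support, (d a ≠ 0 ∨ d b ≠ 0) ∨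
        ∃ lam ∈ LambdaSet k E a b, lam ∣ (monomial d (p.coeff d) : MvPolynomial V k) := by
  classical
  obtain ⟨q, hq⟩ := Ideal.Quotient.mk_surjective (φ (edgeGen k E a b hab))
  set Bad : (V →₀ ℕ) → Prop :=
    fun d => ∃ u v, E u v ∧ Finsupp.single u 1 + Finsupp.single v 1 ≤ d with hBad
  set S : Finset (V →₀ ℕ) := q.support.filter (fun d => ¬ Bad d) with hS
  set p : MvPolynomial V k := ∑ d ∈ S, monomial d (q.coeff d) with hp
  have hpc : ∀ d, p.coeff d = if d ∈ S then q.coeff d else 0 := by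
    intro d
    rw [hp, coeff_sum]
    simp only [coeff_monomial]
    exact Finset.sum_ite_eq' S d (fun e => q.coeff e)
  have hmkp : Ideal.Quotient.mk (edgeIdeal k E) p = φ (edgeGen k E a b hab) := by
    rw [← hq, Ideal.Quotient.eq, mem_edgeIdeal_iff]
    intro d hd
    rw [mem_support_iff, coeff_sub, hpc] at hd
    by_cases hdS : d ∈ S
    · rw [if_pos hdS] at hd; exact absurd (sub_self _) hd
    · rw [if_neg hdS] at hd
      have hdq : d ∈ q.support := by
        rw [mem_support_iff]; intro h0; rw [h0] at hd; exact hd (by ring)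
      have : Bad d := by
        by_contra hB
        exact hdS (Finset.mem_filter.mpr ⟨hdq, hB⟩)
      exact this
  refine ⟨p, hmkp, ?_⟩
  intro d hd
  by_cases hda : d a ≠ 0
  · exact Or.inl (Or.inl hda)
  by_cases hdb : d b ≠ 0
  · exact Or.inl (Or.inr hdb)
  push_neg at hda hdb
  right
  -- basic facts about d
  rw [mem_support_iff, hpc] at hd
  have hdS : d ∈ S := by
    by_contra h; rw [if_neg h] at hd; exact hd rfl
  rw [if_pos hdS] at hd
  obtain ⟨hdq, hnbad⟩ := Finset.mem_filter.mp hdS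
  have hdq' : q.coeff d ≠ 0 := hd
  -- the key step for every g in Lambda
  set Lf : Finset V := (nbhd E a).erase b ∪ (nbhd E b).erase a with hLf
  have hkey : ∀ g ∈ Lf, ∃ h, E g h ∧ h ≠ a ∧ h ≠ b ∧ d h ≠ 0 := by
    intro g hgm
    rw [hLf, Finset.mem_union, Finset.mem_erase, Finset.mem_erase] at hgm
    rcases hgm with ⟨hgb, hgn⟩ | ⟨hga, hgn⟩
    · exact key_step E hsymm φ a b hab q hq d hdq' hnbad hda hdb g
        ((mem_nbhd E a g).mp hgn) hgb
    · have hq' : Ideal.Quotient.mk (edgeIdeal k E) q = φ (edgeGen k E b a (hsymm hab)) := by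
        rw [hq]
        congr 1
        exact Subtype.ext (mul_comm (X a) (X b))
      obtain ⟨h, h1, h2, h3, h4⟩ := key_step E hsymm φ b a (hsymm hab) q hq' d hdq' hnbad hdb hda g
        ((mem_nbhd E b g).mp hgn) hga
      exact ⟨h, h1, h3, h2, h4⟩
  choose f hf1 hf2 hf3 hf4 using hkey
  set c : V → V := fun g => if hgm : g ∈ Lf then f g hgm else g with hc
  have hcmem : ∀ g (hgm : g ∈ Lf), c g = f g hgm := by
    intro g hgm; rw [hc]; exact dif_pos hgm
  have hcd : ∀ g ∈ Lf, d (c g) ≠ 0 := by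
    intro g hgm; rw [hcmem g hgm]; exact hf4 g hgm
  refine ⟨∏ v ∈ Lf.image c, X v, ⟨c, ?_, rfl⟩, ?_⟩
  · intro g hgm
    rw [hcmem g hgm, Finset.mem_sdiff]
    refine ⟨(mem_nbhd E g _).mpr (hf1 g hgm), ?_⟩
    simp only [Finset.mem_insert, Finset.mem_singleton]
    push_neg
    exact ⟨hf2 g hgm, hf3 g hgm⟩
  · rw [prod_X_eq_monomial, monomial_dvd_monomial]
    refine ⟨Or.inr ?_, one_dvd _⟩
    intro x
    rw [Finsupp.finset_sum_apply]
    have hsum : ∑ v ∈ Lf.image c, (Finsupp.single v 1 : V →₀ ℕ) x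
        = if x ∈ Lf.image c then 1 else 0 := by
      simp only [Finsupp.single_apply]
      exact Finset.sum_ite_eq' _ x (fun _ => 1)
    rw [hsum]
    by_cases hx : x ∈ Lf.image c
    · rw [if_pos hx]
      obtain ⟨g, hgm, rfl⟩ := Finset.mem_image.mp hx
      exact Nat.one_le_iff_ne_zero.mpr (hcd g hgm)
    · rw [if_neg hx]; exact Nat.zero_le _


end
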